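/- Let Z ∈ R^{d×n} with n < d have rank n. Then the max-margin γ = max_{‖θ‖₂=1} min_i (Zᵀθ)_i satisfies γ ≥ s_min(Z)/√n, where s_min(Z) is the smallest nonzero singular value of Z. -/
import Mathlib
open Matrix


/-- If Z ∈ R^{d×n}, n < d, has full column rank n, then the max-margin
γ = max_{‖θ‖=1} min_i (Z.transposeθ)_i satisfies γ ≥ s_min(Z)/√n, where s_min is the
smallest (nonzero) singular value of Z, characterized by
s_min‖v‖ ≤ ‖Zv‖ for all v. -/
theorem stmt_5 {d n : ℕ} (hn : 0 < n) (hnd : n < d)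
    (Z : Matrix (Fin d) (Fin n) ℝ) (hrank : Z.rank = n)
    (smin : ℝ) (hsmin0 : 0 ≤ smin)
    (hsmin : ∀ v : Fin n → ℝ,
      smin * Real.sqrt (∑ i, v i ^ 2) ≤ Real.sqrt (∑ j, Z.mulVec v j ^ 2)) :
    smin / Real.sqrt n ≤
      sSup {g | ∃ θ : Fin d → ℝ, (∑ j, θ j ^ 2) = 1 ∧
        g = ⨅ i, Z.transpose.mulVec θ i} := by
  haveI : Nonempty (Fin n) := ⟨⟨0, hn⟩⟩
  -- Z.transposeZ is surjective as a linear map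
  have hArank : (Z.transpose * Z).rank = n := by
    rw [Matrix.rank_transpose_mul_self]; exact hrank
  have hsurj : Function.Surjective (Z.transpose * Z).mulVecLin := by
    rw [← LinearMap.range_eq_top]
    apply Submodule.eq_top_of_finrank_eq
    rw [← Matrix.rank]
    simp [hArank, Module.finrank_pi]
  obtain ⟨v, hv⟩ := hsurj (fun _ => (1 : ℝ))
  simp only [Matrix.mulVecLin_apply] at hv
  set w : Fin d → ℝ := Z.mulVec v with hw
  have hZtw : Z.transpose.mulVec w = fun _ => (1 : ℝ) := by
    rw [hw, Matrix.mulVec_mulVec, hv]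
  set S : ℝ := ∑ i, v i with hS
  set Q : ℝ := ∑ i, v i ^ 2 with hQ
  have hQ0 : 0 ≤ Q := Finset.sum_nonneg fun i _ => sq_nonneg _
  -- ∑ w j ^ 2 = S
  have hwS : (∑ j, w j ^ 2) = S := by
    have : (∑ j, w j ^ 2) = w ⬝ᵥ w := by
      simp [dotProduct, sq]
    rw [this, hw, Matrix.dotProduct_mulVec]
    have h2 : Matrix.vecMul (Z.mulVec v) Z = Z.transpose.mulVec (Z.mulVec v) := by
      rw [Matrix.mulVec_transpose]
    rw [h2, ← hw, hZtw]
    simp [dotProduct, hS]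
  have hS0 : 0 ≤ S := by
    rw [← hwS]; exact Finset.sum_nonneg fun i _ => sq_nonneg _
  have hSpos : 0 < S := by
    rcases lt_or_eq_of_le hS0 with h | h
    · exact h
    · exfalso
      have hwz : ∀ j, w j = 0 := by
        intro j
        have h0 := Finset.sum_eq_zero_iff_of_nonneg
          (fun i (_ : i ∈ Finset.univ) => sq_nonneg (w i)) |>.mp (hwS.trans h.symm)
        exact pow_eq_zero_iff (by norm_num) |>.mp (h0 j (Finset.mem_univ j))
      have hw0 : w = 0 := funext hwz
      rw [hw0, Matrix.mulVec_zero] at hZtw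
      have h1 := congrFun hZtw ⟨0, hn⟩
      norm_num at h1
  set N : ℝ := Real.sqrt S with hN
  have hNpos : 0 < N := Real.sqrt_pos.mpr hSpos
  -- the candidate θ
  set θ : Fin d → ℝ := fun j => w j / N with hθ
  have hθnorm : (∑ j, θ j ^ 2) = 1 := by
    simp only [hθ, div_pow]
    rw [← Finset.sum_div, hwS]
    rw [hN, Real.sq_sqrt hS0]
    · exact div_self (ne_of_gt hSpos)
  have hZtθ : ∀ i, Z.transpose.mulVec θ i = N⁻¹ := by
    intro i
    have hθw : θ = N⁻¹ • w := funext fun j => by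
      simp [hθ, div_eq_inv_mul]
    rw [hθw, Matrix.mulVec_smul, hZtw]
    simp
  have hmem : N⁻¹ ∈ {g | ∃ θ : Fin d → ℝ, (∑ j, θ j ^ 2) = 1 ∧
      g = ⨅ i, Z.transpose.mulVec θ i} := by
    refine ⟨θ, hθnorm, ?_⟩
    simp only [hZtθ]
    exact (ciInf_const).symm
  -- bounded above
  have hbdd : BddAbove {g | ∃ θ : Fin d → ℝ, (∑ j, θ j ^ 2) = 1 ∧
      g = ⨅ i, Z.transpose.mulVec θ i} := by
    refine ⟨∑ j, |Z j ⟨0, hn⟩|, ?_⟩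
    rintro g ⟨ψ, hψ, rfl⟩
    have hψ1 : ∀ j, |ψ j| ≤ 1 := by
      intro j
      have h1 : ψ j ^ 2 ≤ 1 := by
        rw [← hψ]
        exact Finset.single_le_sum (fun i (_ : i ∈ Finset.univ) => sq_nonneg (ψ i))
          (Finset.mem_univ j)
      nlinarith [abs_nonneg (ψ j), sq_abs (ψ j)]
    have hinf : (⨅ i, Z.transpose.mulVec ψ i) ≤ Z.transpose.mulVec ψ ⟨0, hn⟩ :=
      ciInf_le (Set.Finite.bddBelow (Set.finite_range _)) _
    refine hinf.trans ?_
    simp only [Matrix.mulVec, dotProduct, Matrix.transpose_apply]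
    apply Finset.sum_le_sum
    intro j _
    calc Z j ⟨0, hn⟩ * ψ j ≤ |Z j ⟨0, hn⟩ * ψ j| := le_abs_self _
      _ = |Z j ⟨0, hn⟩| * |ψ j| := abs_mul _ _
      _ ≤ |Z j ⟨0, hn⟩| * 1 := by
          exact mul_le_mul_of_nonneg_left (hψ1 j) (abs_nonneg _)
      _ = |Z j ⟨0, hn⟩| := mul_one _
  have hle : N⁻¹ ≤ sSup {g | ∃ θ : Fin d → ℝ, (∑ j, θ j ^ 2) = 1 ∧
      g = ⨅ i, Z.transpose.mulVec θ i} := le_csSup hbdd hmem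
  refine le_trans ?_ hle
  -- smin / √n ≤ N⁻¹
  have hkey : smin ^ 2 * Q ≤ S := by
    have h1 := hsmin v
    rw [hwS, ← hQ, ← hN] at h1
    have h2 : (smin * Real.sqrt Q) ^ 2 ≤ N ^ 2 :=
      pow_le_pow_left₀ (by positivity) h1 2
    rw [mul_pow, Real.sq_sqrt hQ0, hN, Real.sq_sqrt hS0] at h2
    exact h2
  have hcs : S ^ 2 ≤ n * Q := by
    have := sq_sum_le_card_mul_sum_sq (s := (Finset.univ : Finset (Fin n))) (f := v)
    simpa [hS, hQ] using this
  have hfinal : smin ^ 2 * S ≤ n := by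
    have h3 : smin ^ 2 * S ^ 2 ≤ smin ^ 2 * (n * Q) :=
      mul_le_mul_of_nonneg_left hcs (sq_nonneg _)
    have h4 : smin ^ 2 * (n * Q) = (n : ℝ) * (smin ^ 2 * Q) := by ring
    have h5 : (n : ℝ) * (smin ^ 2 * Q) ≤ n * S :=
      mul_le_mul_of_nonneg_left hkey (Nat.cast_nonneg n)
    have h6 : smin ^ 2 * S ^ 2 ≤ n * S := h3.trans (h4 ▸ h5)
    have h7 : smin ^ 2 * S * S ≤ n * S := by nlinarith
    exact le_of_mul_le_mul_right (by linarith [h7]) hSpos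
  have hnpos : (0:ℝ) < Real.sqrt n := Real.sqrt_pos.mpr (by exact_mod_cast hn)
  have hgoal : smin * N ≤ Real.sqrt n := by
    rw [hN, ← Real.sqrt_sq hsmin0, ← Real.sqrt_mul (sq_nonneg _)]
    exact Real.sqrt_le_sqrt (by simpa [sq] using hfinal)
  rw [div_le_iff₀ hnpos, inv_mul_eq_div, le_div_iff₀ hNpos]
  exact hgoal
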